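/- arXiv:0811.1607 — 5 statements merged into one kernel-verified Lean document; each statement's English description precedes it below -/
import Mathlib

section
/- Let k ≥ 1 and let G be a group that can be generated by k elements. Then the following are equivalent: (i) there exists an integer N such that for every generating tuple (a₁,…,a_k) of G there is a non-trivial element w of the free group F_k with |w| ≤ N and w(a₁,…,a_k) = 1 in G (i.e. the girth of G with respect to every k-element generating set is uniformly bounded); (ii) there exists a non-trivial element u of F_k such that u(a₁,…,a_k) = 1 in G for every generating tuple (a₁,…,a_k) of G (i.e. G satisfies a non-trivial k-almost identity). -/
/-!
Only (i) ⇒ (ii) has content. Two nontrivial normal subgroups of a free group intersect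
nontrivially: nontrivial elements `x ∈ N`, `y ∈ M` either fail to commute, and then `⁅x, y⁆` is a
nontrivial element of `N ⊓ M`, or they are powers `z ^ m`, `z ^ n` of one element (the subgroup
they generate is free and abelian, hence cyclic), and then `z ^ (m * n) ∈ N ⊓ M`. By induction the
normal closures of the finitely many nontrivial words of length `≤ N` have a common nontrivial
element `u`. Every generating tuple kills one of these words, so it kills `u`.
-/

open Subgroup
open scoped commutatorElement

namespace IsFreeGroup

variable {G : Type*} [Group G] [IsFreeGroup G] [IsMulCommutative G]

theorem subsingleton_generators : Subsingleton (Generators G) := by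
  classical
  refine ⟨fun i j => by_contra fun hij => ?_⟩
  let f : G →* Equiv.Perm (Fin 3) :=
    lift fun t => if t = i then Equiv.swap 0 1 else Equiv.swap 1 2
  have := congrArg f (IsMulCommutative.is_comm.comm (of i) (of j))
  simp only [f, map_mul, lift_of, if_true, if_neg (Ne.symm hij)] at this
  exact absurd this (by decide)

theorem isCyclic : IsCyclic G := by
  have := subsingleton_generators (G := G)
  have : IsCyclic (FreeGroup (Generators G)) := by
    cases isEmpty_or_nonempty (Generators G)
    · infer_instance
    · have := uniqueOfSubsingleton (Classical.arbitrary (Generators G))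
      infer_instance
  exact (toFreeGroup G).symm.isCyclic.mp this

end IsFreeGroup

namespace FreeGroup

variable {α : Type*}

theorem exists_zpow_eq_of_commute {x y : FreeGroup α} (h : Commute x y) :
    ∃ z : FreeGroup α, ∃ m n : ℤ, z ^ m = x ∧ z ^ n = y := by
  have := isMulCommutative_closure (k := {x, y}) (by
    simp only [Set.mem_insert_iff, Set.mem_singleton_iff]
    rintro a (rfl | rfl) b (rfl | rfl) <;> first | rfl | exact h | exact h.symm)
  obtain ⟨z, hz⟩ := (IsFreeGroup.isCyclic (G := closure {x, y})).exists_generator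
  obtain ⟨m, hm⟩ := mem_zpowers_iff.mp (hz ⟨x, subset_closure (by simp)⟩)
  obtain ⟨n, hn⟩ := mem_zpowers_iff.mp (hz ⟨y, subset_closure (by simp)⟩)
  exact ⟨z, m, n, congrArg Subtype.val hm, congrArg Subtype.val hn⟩

theorem inf_ne_bot_of_normal {N M : Subgroup (FreeGroup α)} [N.Normal] [M.Normal]
    (hN : N ≠ ⊥) (hM : M ≠ ⊥) : N ⊓ M ≠ ⊥ := by
  obtain ⟨x, hxN, hx⟩ := N.bot_or_exists_ne_one.resolve_left hN
  obtain ⟨y, hyM, hy⟩ := M.bot_or_exists_ne_one.resolve_left hM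
  suffices ∃ g ∈ N ⊓ M, g ≠ 1 from fun h => by simp_all
  by_cases hxy : Commute x y
  · obtain ⟨z, m, n, rfl, rfl⟩ := exists_zpow_eq_of_commute hxy
    have hm : m ≠ 0 := by rintro rfl; simp at hx
    have hn : n ≠ 0 := by rintro rfl; simp at hy
    refine ⟨z ^ (m * n), mem_inf.mpr ⟨?_, ?_⟩, by simp_all⟩
    · simpa only [zpow_mul] using zpow_mem hxN n
    · simpa only [mul_comm m, zpow_mul] using zpow_mem hyM m
  · exact ⟨⁅x, y⁆, commutator_le_inf N M (commutator_mem_commutator hxN hyM),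
      mt commutatorElement_eq_one_iff_commute.mp hxy⟩

theorem biInf_ne_bot_of_normal [Nonempty α] {ι : Type*} {s : Set ι} (hs : s.Finite)
    (N : ι → Subgroup (FreeGroup α)) [∀ i, (N i).Normal] (hN : ∀ i ∈ s, N i ≠ ⊥) :
    ⨅ i ∈ s, N i ≠ ⊥ := by
  induction s, hs using Set.Finite.induction_on with
  | empty => simp
  | @insert a s _ _ ih =>
    have : (⨅ i ∈ s, N i).Normal :=
      normal_iInf_normal fun _ => normal_iInf_normal fun _ => inferInstance
    rw [iInf_insert]
    exact inf_ne_bot_of_normal (hN a (s.mem_insert a))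
      (ih fun i hi => hN i (Set.mem_insert_of_mem a hi))

theorem finite_setOf_toWord_length_le [DecidableEq α] [Finite α] (n : ℕ) :
    {w : FreeGroup α | w.toWord.length ≤ n}.Finite :=
  (List.finite_length_le _ n).preimage toWord_injective.injOn

end FreeGroup

theorem girth_bounded_iff_almost_identity_general (k : ℕ) (hk : 1 ≤ k) (G : Type) [Group G] :
    (∃ N : ℕ, ∀ a : Fin k → G, Subgroup.closure (Set.range a) = ⊤ →
        ∃ w : FreeGroup (Fin k), w ≠ 1 ∧ w.toWord.length ≤ N ∧ FreeGroup.lift a w = 1)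
      ↔ (∃ u : FreeGroup (Fin k), u ≠ 1 ∧ ∀ a : Fin k → G,
          Subgroup.closure (Set.range a) = ⊤ → FreeGroup.lift a u = 1) := by
  have : Nonempty (Fin k) := ⟨⟨0, hk⟩⟩
  constructor
  · rintro ⟨N, hN⟩
    let S := {w : FreeGroup (Fin k) | w ≠ 1 ∧ w.toWord.length ≤ N}
    have hS : S.Finite := (FreeGroup.finite_setOf_toWord_length_le N).subset fun w hw => hw.2
    have hbot : ⨅ w ∈ S, normalClosure {w} ≠ ⊥ :=
      FreeGroup.biInf_ne_bot_of_normal hS _ fun w hw => by simpa using hw.1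
    obtain ⟨u, hu, hu1⟩ := (bot_or_exists_ne_one _).resolve_left hbot
    refine ⟨u, hu1, fun a ha => ?_⟩
    obtain ⟨w, hw1, hwN, hwa⟩ := hN a ha
    have huw : u ∈ normalClosure {w} := mem_iInf.mp (mem_iInf.mp hu w) ⟨hw1, hwN⟩
    exact normalClosure_le_normal (Set.singleton_subset_iff.2 ((FreeGroup.lift a).mem_ker.mpr hwa)) huw
  · rintro ⟨u, hu, hall⟩
    exact ⟨u.toWord.length, fun a ha => ⟨u, hu, le_rfl, hall a ha⟩⟩

/-- Let `k ≥ 1` and let `G` be a group generated by `k` elements. Then the girth of `G` is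
uniformly bounded over all `k`-element generating sets (i): there is `N` such that every
generating `k`-tuple satisfies a non-trivial relation of length at most `N`, if and only if
(ii) `G` satisfies a non-trivial `k`-almost identity: some non-trivial `u ∈ F_k` vanishes on
every generating `k`-tuple of `G`. -/
theorem girth_bounded_iff_almost_identity (k : ℕ) (hk : 1 ≤ k) (G : Type) [Group G]
    (hgen : ∃ a : Fin k → G, Subgroup.closure (Set.range a) = ⊤) :
    (∃ N : ℕ, ∀ a : Fin k → G, Subgroup.closure (Set.range a) = ⊤ →
        ∃ w : FreeGroup (Fin k), w ≠ 1 ∧ w.toWord.length ≤ N ∧ FreeGroup.lift a w = 1)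
      ↔ (∃ u : FreeGroup (Fin k), u ≠ 1 ∧ ∀ a : Fin k → G,
          Subgroup.closure (Set.range a) = ⊤ → FreeGroup.lift a u = 1) :=
  girth_bounded_iff_almost_identity_general k hk G
end

section
/- Let F be a free group and let W be a finite set of non-trivial elements of F. Then the intersection over all w ∈ W of the normal closures ⟨⟨w⟩⟩ of the single elements w in F is a non-trivial subgroup; that is, there exists a non-trivial element u ∈ F such that u lies in the normal closure of {w} for every w ∈ W. (Consequently, for every group G and every homomorphism φ : F → G, if φ(w)=1 for some w ∈ W then φ(u)=1.) -/
/-!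
Two nontrivial normal subgroups `N`, `M` of a free group meet nontrivially. Pick `1 ≠ u ∈ N` and
`1 ≠ a ∈ M`. If they do not commute, `⁅u, a⁆ ∈ N ⊓ M` is nontrivial. If they commute, they
generate a subgroup that is free (Nielsen–Schreier) and abelian, hence cyclic, so `u ^ q = a ^ p`
with `q ≠ 0`, and `u ^ q ≠ 1` because free groups are torsion-free. Induction over `W` then gives
a nontrivial element of `⨅ w ∈ W, ⟨⟨w⟩⟩`, which every `φ` killing some `w ∈ W` kills.
-/

open Subgroup
open scoped commutatorElement

theorem FreeGroup.not_commute_of_ne {β : Type*} {x y : β} (h : x ≠ y) :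
    ¬Commute (of x) (of y) := by
  classical
  intro hc
  have := congrArg (FreeGroup.lift fun z => if z = x then (Equiv.swap 0 1 : Equiv.Perm (Fin 3))
    else if z = y then Equiv.swap 1 2 else 1) hc.eq
  simp only [_root_.map_mul, lift_apply_of, if_neg h, if_neg h.symm, if_true] at this
  exact absurd this (by decide)

namespace IsFreeGroup

variable {G : Type*} [Group G] [IsFreeGroup G]

theorem isMulTorsionFree : IsMulTorsionFree G :=
  (toFreeGroup G).injective.isMulTorsionFree (toFreeGroup G).toMonoidHom

theorem isCyclic_of_isMulCommutative [IsMulCommutative G] : IsCyclic G := by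
  have : Subsingleton (Generators G) := ⟨fun x y => by
    by_contra h
    exact FreeGroup.not_commute_of_ne h <| by
      simpa [commute_iff_eq] using congrArg (toFreeGroup G)
        (mul_comm' ((toFreeGroup G).symm (.of x)) ((toFreeGroup G).symm (.of y)))⟩
  rcases isEmpty_or_nonempty (Generators G) with _ | _
  · have : Subsingleton G := (toFreeGroup G).toEquiv.subsingleton
    infer_instance
  · have := uniqueOfSubsingleton (Classical.arbitrary (Generators G))
    exact isCyclic_of_surjective (toFreeGroup G).symm (toFreeGroup G).symm.surjective

theorem exists_zpow_eq_zpow_of_commute {u a : G} (h : Commute u a) (ha : a ≠ 1) :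
    ∃ p q : ℤ, q ≠ 0 ∧ u ^ q = a ^ p := by
  let H := closure ({u, a} : Set G)
  have : IsMulCommutative H := isMulCommutative_closure <| by
    simp only [Set.mem_insert_iff, Set.mem_singleton_iff]
    rintro x (rfl | rfl) y (rfl | rfl)
    exacts [rfl, h.eq, h.symm.eq, rfl]
  obtain ⟨g, hg⟩ := isCyclic_of_isMulCommutative (G := H)
  obtain ⟨m, hm⟩ := hg ⟨u, subset_closure (by simp)⟩
  obtain ⟨n, hn⟩ := hg ⟨a, subset_closure (by simp)⟩
  have hu : (g : G) ^ m = u := congrArg Subtype.val hm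
  have ha' : (g : G) ^ n = a := congrArg Subtype.val hn
  refine ⟨m, n, fun hn0 => ha ?_, ?_⟩
  · simp [← ha', hn0]
  · rw [← hu, ← ha', ← zpow_mul, ← zpow_mul, mul_comm]

theorem inf_ne_bot {N M : Subgroup G} [N.Normal] [M.Normal] (hN : N ≠ ⊥) (hM : M ≠ ⊥) :
    N ⊓ M ≠ ⊥ := by
  have := isMulTorsionFree (G := G)
  obtain ⟨u, huN, hu⟩ : ∃ u ∈ N, u ≠ 1 := by simpa [eq_bot_iff_forall] using hN
  obtain ⟨a, haM, ha⟩ : ∃ a ∈ M, a ≠ 1 := by simpa [eq_bot_iff_forall] using hM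
  simp only [ne_eq, eq_bot_iff_forall, not_forall]
  by_cases hc : Commute u a
  · obtain ⟨p, q, hq, hpq⟩ := exists_zpow_eq_zpow_of_commute hc ha
    exact ⟨u ^ q, ⟨zpow_mem huN q, hpq ▸ zpow_mem haM p⟩, by simpa [hq] using hu⟩
  · exact ⟨⁅u, a⁆, commutator_le_inf N M (commutator_mem_commutator huN haM),
      by simpa [commutatorElement_eq_one_iff_commute] using hc⟩

theorem biInf_ne_bot [Nontrivial G] {ι : Type*} (s : Finset ι) {N : ι → Subgroup G}
    (hN : ∀ i ∈ s, (N i).Normal) (hne : ∀ i ∈ s, N i ≠ ⊥) : ⨅ i ∈ s, N i ≠ ⊥ := by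
  classical
  induction s using Finset.induction_on with
  | empty => simp
  | insert i s _ ih =>
    rw [Finset.forall_mem_insert] at hN hne
    have := hN.1
    have := normal_iInf_normal fun j => normal_iInf_normal (hN.2 j)
    rw [Finset.iInf_insert]
    exact inf_ne_bot hne.1 (ih hN.2 hne.2)

end IsFreeGroup

/-- Let `F` be a free group (on a nonempty set of generators) and let `W` be a finite set of
non-trivial elements of `F`. Then there exists a non-trivial element `u ∈ F` lying in the
normal closure `⟨⟨w⟩⟩` of each single element `w ∈ W`; consequently, for every group `G` and
homomorphism `φ : F → G`, if `φ(w) = 1` for some `w ∈ W` then `φ(u) = 1`. -/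
theorem exists_nontrivial_in_all_normalClosures (α : Type) [Nonempty α]
    (W : Finset (FreeGroup α)) (hW : ∀ w ∈ W, w ≠ 1) :
    ∃ u : FreeGroup α, u ≠ 1 ∧ (∀ w ∈ W, u ∈ Subgroup.normalClosure {w}) ∧
      ∀ (G : Type) [Group G] (φ : FreeGroup α →* G), (∃ w ∈ W, φ w = 1) → φ u = 1 := by
  have hne : ∀ w ∈ W, normalClosure {w} ≠ ⊥ := fun w hw => by
    simpa [normalClosure_eq_bot_iff] using hW w hw
  obtain ⟨u, hu, hu1⟩ : ∃ u ∈ ⨅ w ∈ W, normalClosure {w}, u ≠ 1 := by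
    simpa [eq_bot_iff_forall] using
      IsFreeGroup.biInf_ne_bot W (fun _ _ => normalClosure_normal) hne
  have hmem : ∀ w ∈ W, u ∈ normalClosure {w} := by simpa [mem_iInf] using hu
  refine ⟨u, hu1, hmem, ?_⟩
  rintro G _ φ ⟨w, hw, hφ⟩
  exact normalClosure_le_normal (N := φ.ker) (by simpa using hφ) (hmem w hw)
end

section
/- In the quaternion group Q₈ of order 8: for every pair of elements (a,b) that generates Q₈ one has a²b² = 1 (so x₁²x₂² is a 2-almost identity of Q₈); however, x₁²x₂² is not an identity of Q₈, i.e. there exist elements a, b ∈ Q₈ with a²b² ≠ 1. -/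
/-!
Every square in `Q₈` is `1` or the central involution `a 2`, and the only elements squaring to `1`
are `1` and `a 2`. So if `x² = 1`, then `x` lies in the cyclic subgroup generated by any element
whose square is `a 2`; for a generating pair this would make `Q₈` cyclic, which it is not since
its exponent is `4`. Hence both generators square to `a 2`, and `a 2 * a 2 = 1`.
-/

open Subgroup

theorem Subgroup.closure_pair_le_zpowers {G : Type*} [Group G] {x y z : G}
    (hx : x ∈ zpowers z) (hy : y ∈ zpowers z) : closure {x, y} ≤ zpowers z :=
  (closure_le _).2 (Set.insert_subset hx (Set.singleton_subset_iff.2 hy))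

namespace QuaternionGroup

theorem not_isCyclic_two : ¬IsCyclic (QuaternionGroup 2) := fun h => by
  have h_card := h.exponent_eq_card
  rw [exponent, Nat.card_eq_fintype_card, card] at h_card
  norm_num at h_card

theorem sq_eq_one_or_eq_a_two (x : QuaternionGroup 2) : x ^ 2 = 1 ∨ x ^ 2 = a 2 := by
  revert x; decide

theorem eq_one_or_eq_a_two_of_sq_eq_one {x : QuaternionGroup 2} :
    x ^ 2 = 1 → x = 1 ∨ x = a 2 := by
  revert x; decide

theorem mem_zpowers_of_sq_eq_one {x y : QuaternionGroup 2} (hx : x ^ 2 = 1) (hy : y ^ 2 = a 2) :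
    x ∈ zpowers y := by
  rcases eq_one_or_eq_a_two_of_sq_eq_one hx with rfl | rfl
  · exact one_mem _
  · exact hy ▸ pow_mem (mem_zpowers y) 2

theorem sq_ne_one_of_closure_pair_eq_top {x y : QuaternionGroup 2}
    (h : closure {x, y} = ⊤) : x ^ 2 ≠ 1 := by
  intro hx
  obtain ⟨z, hz, hyz⟩ : ∃ z : QuaternionGroup 2, z ^ 2 = a 2 ∧ y ∈ zpowers z := by
    rcases sq_eq_one_or_eq_a_two y with hy | hy
    · exact ⟨a 1, by decide, mem_zpowers_of_sq_eq_one hy (by decide)⟩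
    · exact ⟨y, hy, mem_zpowers y⟩
  refine not_isCyclic_two (isCyclic_iff_exists_zpowers_eq_top.2 ⟨z, top_le_iff.1 ?_⟩)
  exact h ▸ closure_pair_le_zpowers (mem_zpowers_of_sq_eq_one hx hz) hyz

theorem sq_eq_a_two_of_closure_pair_eq_top {x y : QuaternionGroup 2}
    (h : closure {x, y} = ⊤) : x ^ 2 = a 2 :=
  (sq_eq_one_or_eq_a_two x).resolve_left (sq_ne_one_of_closure_pair_eq_top h)

end QuaternionGroup

/-- In the quaternion group `Q₈` of order 8: for every generating pair `(a, b)` one has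
`a²b² = 1` (so `x₁²x₂²` is a 2-almost identity of `Q₈`); however, `x₁²x₂²` is not an
identity of `Q₈`: there exist `a, b ∈ Q₈` with `a²b² ≠ 1`. -/
theorem quaternion_almost_identity :
    (∀ a b : QuaternionGroup 2, Subgroup.closure {a, b} = ⊤ → a ^ 2 * b ^ 2 = 1) ∧
      ∃ a b : QuaternionGroup 2, a ^ 2 * b ^ 2 ≠ 1 := by
  refine ⟨fun x y h => ?_, QuaternionGroup.a 1, 1, by decide⟩
  have hx := QuaternionGroup.sq_eq_a_two_of_closure_pair_eq_top h
  have hy := QuaternionGroup.sq_eq_a_two_of_closure_pair_eq_top (Set.pair_comm x y ▸ h)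
  rw [hx, hy]
  decide
end

section
/- In the symmetric group S₃ on 3 letters: for every pair of elements (a,b) that generates S₃ one has a²ba²b⁻¹ = 1 (so x₁²x₂x₁²x₂⁻¹ is a 2-almost identity of S₃); however, x₁²x₂x₁²x₂⁻¹ is not an identity of S₃, i.e. there exist elements a, b ∈ S₃ with a²ba²b⁻¹ ≠ 1. -/
/-!
A generating pair of `S₃` cannot lie in the alternating group, so one of `a`, `b` is odd.
If `a` is odd it is a transposition and `a² = 1`. Otherwise `a` is a power of a 3-cycle and
`b` is odd, so `b` conjugates `a` to `a⁻¹` and `a² (b a² b⁻¹) = a² a⁻² = 1`. A 3-cycle `a`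
with `b = 1` shows that the word is not an identity, since `a⁴ = a ≠ 1`.
-/

open Equiv Perm

theorem Equiv.Perm.sign_eq_neg_one_or_of_closure_pair_eq_top {α : Type*} [Fintype α]
    [DecidableEq α] [Nontrivial α] {a b : Perm α} (h : Subgroup.closure {a, b} = ⊤) :
    sign a = -1 ∨ sign b = -1 := by
  by_contra! hab
  have hle : Subgroup.closure {a, b} ≤ alternatingGroup α := by
    rw [Subgroup.closure_le, Set.insert_subset_iff, Set.singleton_subset_iff]
    exact ⟨(Int.units_eq_one_or _).resolve_right hab.1,
      (Int.units_eq_one_or _).resolve_right hab.2⟩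
  rw [h, top_le_iff] at hle
  have := alternatingGroup.index_eq_two (α := α)
  simp [hle] at this

theorem Equiv.Perm.sq_eq_one_of_sign_eq_neg_one_fin_three {a : Perm (Fin 3)}
    (ha : sign a = -1) : a ^ 2 = 1 := by
  revert a
  decide

theorem Equiv.Perm.conj_eq_inv_of_sign_fin_three {a b : Perm (Fin 3)} (ha : sign a = 1)
    (hb : sign b = -1) : b * a * b⁻¹ = a⁻¹ := by
  revert a b
  decide

/-- In the symmetric group `S₃` on 3 letters: for every generating pair `(a, b)` one has
`a²ba²b⁻¹ = 1` (so `x₁²x₂x₁²x₂⁻¹` is a 2-almost identity of `S₃`); however, it is not an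
identity of `S₃`: there exist `a, b ∈ S₃` with `a²ba²b⁻¹ ≠ 1`. -/
theorem symmetric_group_almost_identity :
    (∀ a b : Equiv.Perm (Fin 3), Subgroup.closure {a, b} = ⊤ →
        a ^ 2 * b * a ^ 2 * b⁻¹ = 1) ∧
      ∃ a b : Equiv.Perm (Fin 3), a ^ 2 * b * a ^ 2 * b⁻¹ ≠ 1 := by
  refine ⟨fun a b hgen => ?_, ⟨finRotate 3, 1, by decide⟩⟩
  rcases Int.units_eq_one_or (sign a) with ha | ha
  · have hb : sign b = -1 :=
      (sign_eq_neg_one_or_of_closure_pair_eq_top hgen).resolve_left (by simp [ha])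
    calc a ^ 2 * b * a ^ 2 * b⁻¹ = a ^ 2 * (b * a * b⁻¹) ^ 2 := by
          rw [conj_pow, mul_assoc, mul_assoc, mul_assoc]
      _ = 1 := by rw [conj_eq_inv_of_sign_fin_three ha hb, inv_pow, mul_inv_cancel]
  · simp [sq_eq_one_of_sign_eq_neg_one_fin_three ha]
end

section
/- Let n > 1 be an integer and let G = F₂/ⁿF₂. Then for every k ≥ 1 and every tuple (g₁,…,g_k) of elements of G that generates G, there exists an index i such that gᵢⁿ = 1 in G. Consequently, the girth of G with respect to every finite generating set is at most n: for every generating tuple there is a non-trivial word w of length at most n in the free group F_k with w(g₁,…,g_k) = 1. -/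
/-- The exponent sum of the generator `i` in a word of the free group `F₂ = F(a,b)`
(we take `a` = `FreeGroup.of 0`, `b` = `FreeGroup.of 1`). -/
def expSum (i : Fin 2) : FreeGroup (Fin 2) →* Multiplicative ℤ :=
  FreeGroup.lift (fun j => Multiplicative.ofAdd (if j = i then (1 : ℤ) else 0))

/-- The set of all `n`-th powers `wⁿ` of elements `w ∈ F₂` such that the exponent sum of `a`
in `w` or the exponent sum of `b` in `w` is not divisible by `n`. -/
def nPowSet (n : ℕ) : Set (FreeGroup (Fin 2)) :=
  {x | ∃ w : FreeGroup (Fin 2),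
    (¬ (n : ℤ) ∣ (expSum 0 w).toAdd ∨ ¬ (n : ℤ) ∣ (expSum 1 w).toAdd) ∧ x = w ^ n}

/-- `ⁿF₂`: the subgroup of `F₂` generated by `nPowSet n`. -/
def nF2 (n : ℕ) : Subgroup (FreeGroup (Fin 2)) := Subgroup.closure (nPowSet n)

lemma expSum_conj (i : Fin 2) (g w : FreeGroup (Fin 2)) :
    expSum i (g * w * g⁻¹) = expSum i w := by
  rw [map_mul, map_mul, map_inv, mul_comm ((expSum i) g), mul_inv_cancel_right]

lemma conjugatesOfSet_nPowSet (n : ℕ) :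
    Group.conjugatesOfSet (nPowSet n) = nPowSet n := by
  refine Set.Subset.antisymm ?_ Group.subset_conjugatesOfSet
  intro x hx
  rw [Group.mem_conjugatesOfSet_iff] at hx
  obtain ⟨a, ⟨w, hw, rfl⟩, hconj⟩ := hx
  obtain ⟨c, rfl⟩ := isConj_iff.1 hconj
  exact ⟨c * w * c⁻¹, by simpa [expSum_conj] using hw, (conj_pow).symm⟩

/-- `ⁿF₂` is a normal subgroup of `F₂`. -/
instance nF2_normal (n : ℕ) : (nF2 n).Normal := by
  have h : nF2 n = Subgroup.normalClosure (nPowSet n) := by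
    rw [nF2, Subgroup.normalClosure, conjugatesOfSet_nPowSet]
  rw [h]
  exact Subgroup.normalClosure_normal

/-!
The exponent sum of `a` taken mod `n` kills every `n`-th power, so it descends to a
homomorphism `G → ℤ/n`, nonzero on the image of `a`. If no generator `gᵢ` satisfied `gᵢⁿ = 1`,
then every lift `wᵢ ∈ F₂` of `gᵢ` would have both exponent sums divisible by `n` (otherwise
`wᵢⁿ ∈ ⁿF₂`), so this homomorphism would vanish on a generating set of `G`, absurd. A generator
with `gᵢⁿ = 1` gives the relator `xᵢⁿ` of length `n`.
-/

theorem FreeGroup.exists_ne_one_length_le_lift_eq_one {ι H : Type*} [DecidableEq ι] [Group H]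
    (g : ι → H) {i : ι} {n : ℕ} (hn : n ≠ 0) (hi : g i ^ n = 1) :
    ∃ w : FreeGroup ι, w ≠ 1 ∧ w.toWord.length ≤ n ∧ FreeGroup.lift g w = 1 := by
  refine ⟨FreeGroup.of i ^ n, ?_, by simp [FreeGroup.toWord_of_pow], by simp [hi]⟩
  intro h
  simpa [hn] using congrArg FreeGroup.toWord h

def expSumMod (n : ℕ) (i : Fin 2) : FreeGroup (Fin 2) →* Multiplicative (ZMod n) :=
  (Int.castAddHom (ZMod n)).toMultiplicative.comp (expSum i)

lemma expSumMod_eq_one_iff {n : ℕ} {i : Fin 2} {w : FreeGroup (Fin 2)} :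
    expSumMod n i w = 1 ↔ (n : ℤ) ∣ (expSum i w).toAdd :=
  ZMod.intCast_zmod_eq_zero_iff_dvd _ n

lemma expSumMod_of_self (n : ℕ) (i : Fin 2) :
    expSumMod n i (FreeGroup.of i) = Multiplicative.ofAdd 1 := by
  simp [expSumMod, expSum]

lemma nF2_le_ker_expSumMod (n : ℕ) (i : Fin 2) : nF2 n ≤ (expSumMod n i).ker := by
  rw [nF2, Subgroup.closure_le]
  rintro _ ⟨w, -, rfl⟩
  rw [SetLike.mem_coe, MonoidHom.mem_ker, map_pow, ← toAdd_eq_zero, toAdd_pow, nsmul_eq_mul,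
    ZMod.natCast_self, zero_mul]

def quotientExpSumMod (n : ℕ) (i : Fin 2) : FreeGroup (Fin 2) ⧸ nF2 n →* Multiplicative (ZMod n) :=
  QuotientGroup.lift _ (expSumMod n i) (nF2_le_ker_expSumMod n i)

@[simp]
lemma quotientExpSumMod_mk (n : ℕ) (i : Fin 2) (w : FreeGroup (Fin 2)) :
    quotientExpSumMod n i w = expSumMod n i w :=
  rfl

lemma pow_eq_one_or_quotientExpSumMod_eq_one (n : ℕ) (x : FreeGroup (Fin 2) ⧸ nF2 n) :
    x ^ n = 1 ∨ ∀ i, quotientExpSumMod n i x = 1 := by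
  obtain ⟨w, rfl⟩ := QuotientGroup.mk_surjective x
  by_cases hdvd : (n : ℤ) ∣ (expSum 0 w).toAdd ∧ (n : ℤ) ∣ (expSum 1 w).toAdd
  · refine Or.inr fun i => ?_
    rw [quotientExpSumMod_mk, expSumMod_eq_one_iff]
    fin_cases i
    exacts [hdvd.1, hdvd.2]
  · refine Or.inl ?_
    rw [← QuotientGroup.mk_pow, QuotientGroup.eq_one_iff]
    exact Subgroup.subset_closure ⟨w, not_and_or.mp hdvd, rfl⟩

theorem exists_pow_eq_one_of_closure_eq_top {ι : Type*} {n : ℕ} (hn : 1 < n)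
    (g : ι → FreeGroup (Fin 2) ⧸ nF2 n) (hgen : Subgroup.closure (Set.range g) = ⊤) :
    ∃ i, g i ^ n = 1 := by
  by_contra! hpow
  have htriv : quotientExpSumMod n 0 = 1 := by
    refine MonoidHom.eq_of_eqOn_dense hgen ?_
    rintro _ ⟨i, rfl⟩
    exact ((pow_eq_one_or_quotientExpSumMod_eq_one n (g i)).resolve_left (hpow i)) 0
  have hof : quotientExpSumMod n 0 (FreeGroup.of 0 : FreeGroup (Fin 2)) = Multiplicative.ofAdd 1 :=
    expSumMod_of_self n 0
  rw [htriv, MonoidHom.one_apply] at hof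
  have : Fact (1 < n) := ⟨hn⟩
  exact one_ne_zero (congrArg Multiplicative.toAdd hof).symm

theorem nF2_quotient_girth_general (n : ℕ) (hn : 1 < n) (k : ℕ)
    (g : Fin k → FreeGroup (Fin 2) ⧸ nF2 n)
    (hgen : Subgroup.closure (Set.range g) = ⊤) :
    (∃ i : Fin k, g i ^ n = 1) ∧
      ∃ w : FreeGroup (Fin k), w ≠ 1 ∧ w.toWord.length ≤ n ∧ FreeGroup.lift g w = 1 := by
  obtain ⟨i, hi⟩ := exists_pow_eq_one_of_closure_eq_top hn g hgen
  exact ⟨⟨i, hi⟩, FreeGroup.exists_ne_one_length_le_lift_eq_one g (by omega) hi⟩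

/-- Let `n > 1` and `G = F₂/ⁿF₂`. For every `k ≥ 1` and every tuple `(g₁,…,g_k)` of elements
of `G` that generates `G`, some `gᵢ` satisfies `gᵢⁿ = 1`; consequently there is a non-trivial
word `w ∈ F_k` of length at most `n` with `w(g₁,…,g_k) = 1`, i.e. the girth of `G` with respect
to every finite generating set is at most `n`. -/
theorem nF2_quotient_girth (n : ℕ) (hn : 1 < n) (k : ℕ) (hk : 1 ≤ k)
    (g : Fin k → FreeGroup (Fin 2) ⧸ nF2 n)
    (hgen : Subgroup.closure (Set.range g) = ⊤) :
    (∃ i : Fin k, g i ^ n = 1) ∧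
      ∃ w : FreeGroup (Fin k), w ≠ 1 ∧ w.toWord.length ≤ n ∧ FreeGroup.lift g w = 1 :=
  nF2_quotient_girth_general n hn k g hgen
end
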